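/- Suppose q0, q1 : ℝ × ℝ → ℂ are infinitely differentiable and satisfy the Boussinesq system ∂_t q0(x,t) + (1/6)∂_x³ q1(x,t) + (2/3) q1(x,t) ∂_x q1(x,t) = 0 and ∂_t q1(x,t) − 2 ∂_x q0(x,t) = 0 for all (x,t) ∈ ℝ². Define u : ℝ × ℝ → ℂ by u(x,t) = −(4 q1(x, √3·t) + 1)/6. Then u satisfies the nonlinear string (Boussinesq) equation ∂_t² u = ∂_x² u + 3 ∂_x²(u²) − ∂_x⁴ u everywhere on ℝ². -/

import Mathlib

noncomputable def DD (v : ℝ × ℝ) (f : ℝ × ℝ → ℂ) : ℝ × ℝ → ℂ :=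
  fun p => fderiv ℝ f p v

lemma ContDiff.dd {f : ℝ × ℝ → ℂ} (hf : ContDiff ℝ (⊤ : ℕ∞) f) (v : ℝ × ℝ) :
    ContDiff ℝ (⊤ : ℕ∞) (DD v f) :=
  (hf.fderiv_right (by simp)).clm_apply contDiff_const

lemma deriv_fst {f : ℝ × ℝ → ℂ} (hf : ContDiff ℝ (⊤ : ℕ∞) f) (x t : ℝ) :
    deriv (fun y => f (y, t)) x = DD (1, 0) f (x, t) := by
  have h1 : HasDerivAt (fun y : ℝ => ((y, t) : ℝ × ℝ)) (1, 0) x :=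
    (hasDerivAt_id x).prodMk (hasDerivAt_const x t)
  exact ((hf.differentiable (by simp) (x, t)).hasFDerivAt.comp_hasDerivAt x h1).deriv

lemma deriv_snd {f : ℝ × ℝ → ℂ} (hf : ContDiff ℝ (⊤ : ℕ∞) f) (x t : ℝ) :
    deriv (fun s => f (x, s)) t = DD (0, 1) f (x, t) := by
  have h1 : HasDerivAt (fun s : ℝ => ((x, s) : ℝ × ℝ)) (0, 1) t :=
    (hasDerivAt_const t x).prodMk (hasDerivAt_id t)
  exact ((hf.differentiable (by simp) (x, t)).hasFDerivAt.comp_hasDerivAt t h1).deriv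

lemma iteratedDeriv_fst {f : ℝ × ℝ → ℂ} (hf : ContDiff ℝ (⊤ : ℕ∞) f) (k : ℕ) (x t : ℝ) :
    iteratedDeriv k (fun y => f (y, t)) x = ((DD (1, 0))^[k] f) (x, t) := by
  induction k generalizing f with
  | zero => simp
  | succ n ih =>
    rw [iteratedDeriv_succ']
    have : deriv (fun y => f (y, t)) = fun y => DD (1, 0) f (y, t) := by
      funext y; exact deriv_fst hf y t
    rw [show (fun y => f (y, t)) = fun y => f (y, t) from rfl]
    calc iteratedDeriv n (deriv fun y => f (y, t)) x
        = iteratedDeriv n (fun y => DD (1,0) f (y, t)) x := by rw [this]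
      _ = ((DD (1,0))^[n] (DD (1,0) f)) (x, t) := ih (hf.dd _)
      _ = ((DD (1,0))^[n+1] f) (x, t) := by rw [Function.iterate_succ_apply]

lemma iteratedDeriv_snd {f : ℝ × ℝ → ℂ} (hf : ContDiff ℝ (⊤ : ℕ∞) f) (k : ℕ) (x t : ℝ) :
    iteratedDeriv k (fun s => f (x, s)) t = ((DD (0, 1))^[k] f) (x, t) := by
  induction k generalizing f with
  | zero => simp
  | succ n ih =>
    rw [iteratedDeriv_succ']
    have : deriv (fun s => f (x, s)) = fun s => DD (0, 1) f (x, s) := by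
      funext s; exact deriv_snd hf x s
    calc iteratedDeriv n (deriv fun s => f (x, s)) t
        = iteratedDeriv n (fun s => DD (0,1) f (x, s)) t := by rw [this]
      _ = ((DD (0,1))^[n] (DD (0,1) f)) (x, t) := ih (hf.dd _)
      _ = ((DD (0,1))^[n+1] f) (x, t) := by rw [Function.iterate_succ_apply]

lemma DD_const_mul_add {f : ℝ × ℝ → ℂ} (hf : Differentiable ℝ f) (c b : ℂ) (v p) :
    DD v (fun q => c * f q + b) p = c * DD v f p := by
  have h : HasFDerivAt (fun q => c * f q + b) (c • fderiv ℝ f p) p :=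
    ((hf p).hasFDerivAt.const_mul c).add_const b
  simp [DD, h.fderiv]

lemma DD_mul {f g : ℝ × ℝ → ℂ} (hf : Differentiable ℝ f) (hg : Differentiable ℝ g) (v p) :
    DD v (fun q => f q * g q) p = DD v f p * g p + f p * DD v g p := by
  simp only [DD]; rw [show fderiv ℝ (fun q => f q * g q) p = _ from fderiv_mul (hf p) (hg p)]
  simp [smul_eq_mul]; ring

lemma DD_swap {f : ℝ × ℝ → ℂ} (hf : ContDiff ℝ (⊤ : ℕ∞) f) (v w : ℝ × ℝ) :
    DD v (DD w f) = DD w (DD v f) := by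
  have hd : Differentiable ℝ (fderiv ℝ f) :=
    (hf.fderiv_right (m := (⊤ : ℕ∞)) (by simp)).differentiable (by simp)
  have key : ∀ (a b : ℝ × ℝ) (p : ℝ × ℝ),
      DD a (DD b f) p = fderiv ℝ (fderiv ℝ f) p a b := by
    intro a b p
    have hA : HasFDerivAt (fun q => fderiv ℝ f q b)
        ((ContinuousLinearMap.apply ℝ ℂ b).comp (fderiv ℝ (fderiv ℝ f) p)) p :=
      (ContinuousLinearMap.apply ℝ ℂ b).hasFDerivAt.comp p (hd p).hasFDerivAt
    unfold DD; simpa using congrArg (fun L => L a) hA.fderiv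
  funext p
  rw [key v w p, key w v p]
  exact second_derivative_symmetric
    (fun y => ((hf.differentiable (by simp)) y).hasFDerivAt) (hd p).hasFDerivAt v w

/-- the scaling map `(x,t)  ↦ (x, √3 t)` as a continuous linear map -/
noncomputable def SS : ℝ × ℝ →L[ℝ] ℝ × ℝ :=
  (ContinuousLinearMap.id ℝ ℝ).prodMap (Real.sqrt 3 • ContinuousLinearMap.id ℝ ℝ)

lemma SS_apply (p : ℝ × ℝ) : SS p = (p.1, Real.sqrt 3 * p.2) := rfl

lemma DD_comp_SS {f : ℝ × ℝ → ℂ} (hf : ContDiff ℝ (⊤ : ℕ∞) f) (v : ℝ × ℝ) (p : ℝ × ℝ) :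
    DD v (fun q => f (SS q)) p = DD (SS v) f (SS p) := by
  have h : HasFDerivAt (fun q => f (SS q)) ((fderiv ℝ f (SS p)).comp SS) p :=
    (hf.differentiable (by simp) (SS p)).hasFDerivAt.comp p SS.hasFDerivAt
  simp [DD, h.fderiv]

lemma DD_smul_vec {f : ℝ × ℝ → ℂ} (c : ℝ) (v : ℝ × ℝ) (p : ℝ × ℝ) :
    DD (c • v) f p = (c : ℂ) * DD v f p := by
  simp [DD, Complex.real_smul]

lemma DD_add {f g : ℝ × ℝ → ℂ} (hf : Differentiable ℝ f) (hg : Differentiable ℝ g) (v p) :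
    DD v (fun q => f q + g q) p = DD v f p + DD v g p := by
  simp only [DD]; rw [show fderiv ℝ (fun q => f q + g q) p = _ from fderiv_add (hf p) (hg p)]; simp

lemma DD_const_mul {f : ℝ × ℝ → ℂ} (hf : Differentiable ℝ f) (c : ℂ) (v p) :
    DD v (fun q => c * f q) p = c * DD v f p := by
  simpa using DD_const_mul_add hf c 0 v p

lemma Dx_form {g : ℝ × ℝ → ℂ} (hg : ContDiff ℝ (⊤ : ℕ∞) g) (c b : ℂ) :
    DD (1,0) (fun p => c * g (SS p) + b) = fun p => c * DD (1,0) g (SS p) := by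
  funext p
  rw [DD_const_mul_add (f := fun p => g (SS p)) ((hg.comp SS.contDiff).differentiable (by simp)) c b]
  rw [DD_comp_SS hg]
  have : SS ((1:ℝ), (0:ℝ)) = (1, 0) := by simp [SS_apply]
  rw [this]

lemma Dx_form' {g : ℝ × ℝ → ℂ} (hg : ContDiff ℝ (⊤ : ℕ∞) g) (c : ℂ) :
    DD (1,0) (fun p => c * g (SS p)) = fun p => c * DD (1,0) g (SS p) := by
  rw [show (fun p => c * g (SS p)) = (fun p => c * g (SS p) + 0) from by funext p; ring]
  exact Dx_form hg c 0

lemma Dt_form' {g : ℝ × ℝ → ℂ} (hg : ContDiff ℝ (⊤ : ℕ∞) g) (c : ℂ) :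
    DD (0,1) (fun p => c * g (SS p)) = fun p => (Real.sqrt 3 : ℂ) * c * DD (0,1) g (SS p) := by
  funext p
  rw [show (fun p => c * g (SS p)) = (fun p => c * g (SS p) + 0) from by funext p; ring]
  rw [DD_const_mul_add (f := fun p => g (SS p)) ((hg.comp SS.contDiff).differentiable (by simp)) c 0]
  rw [DD_comp_SS hg]
  have hv : SS ((0:ℝ), (1:ℝ)) = Real.sqrt 3 • ((0:ℝ), (1:ℝ)) := by
    simp [SS_apply, Prod.ext_iff]
  rw [hv, DD_smul_vec]
  ring

lemma key_q1 (q0 q1 : ℝ × ℝ → ℂ) (hq0 : ContDiff ℝ (⊤ : ℕ∞) q0) (hq1 : ContDiff ℝ (⊤ : ℕ∞) q1)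
    (h1 : ∀ p : ℝ × ℝ, DD (0,1) q0 p + (1/6) * DD (1,0) (DD (1,0) (DD (1,0) q1)) p
        + (2/3) * q1 p * DD (1,0) q1 p = 0)
    (h2 : ∀ p : ℝ × ℝ, DD (0,1) q1 p - 2 * DD (1,0) q0 p = 0) :
    ∀ p : ℝ × ℝ, DD (0,1) (DD (0,1) q1) p
      = (-(1/3)) * DD (1,0) (DD (1,0) (DD (1,0) (DD (1,0) q1))) p
        - (4/3) * (DD (1,0) q1 p * DD (1,0) q1 p + q1 p * DD (1,0) (DD (1,0) q1) p) := by
  intro p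
  have dq1 := hq1.differentiable (by simp)
  have hX : ContDiff ℝ (⊤ : ℕ∞) (DD (1,0) q1) := hq1.dd _
  have hXXX : ContDiff ℝ (⊤ : ℕ∞) (DD (1,0) (DD (1,0) (DD (1,0) q1))) := ((hq1.dd _).dd _).dd _
  have e2 : DD (0,1) q1 = fun q => 2 * DD (1,0) q0 q + 0 := by
    funext q; linear_combination h2 q
  have e1 : DD (0,1) q0 = fun q =>
      (-(1/6)) * DD (1,0) (DD (1,0) (DD (1,0) q1)) q + (-(2/3)) * (q1 q * DD (1,0) q1 q) := by
    funext q; linear_combination h1 q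
  have dA : Differentiable ℝ (fun q => (-(1/6):ℂ) * DD (1,0) (DD (1,0) (DD (1,0) q1)) q) :=
    (hXXX.differentiable (by simp)).const_mul _
  have dmul : Differentiable ℝ (fun q => q1 q * DD (1,0) q1 q) :=
    dq1.mul (hX.differentiable (by simp))
  have dB : Differentiable ℝ (fun q => (-(2/3):ℂ) * (q1 q * DD (1,0) q1 q)) :=
    dmul.const_mul _
  calc DD (0,1) (DD (0,1) q1) p
      = DD (0,1) (fun q => 2 * DD (1,0) q0 q + 0) p := by rw [e2]
    _ = 2 * DD (0,1) (DD (1,0) q0) p :=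
        DD_const_mul_add ((hq0.dd _).differentiable (by simp)) 2 0 _ p
    _ = 2 * DD (1,0) (DD (0,1) q0) p := by rw [DD_swap hq0]
    _ = 2 * DD (1,0) (fun q =>
          (-(1/6)) * DD (1,0) (DD (1,0) (DD (1,0) q1)) q
            + (-(2/3)) * (q1 q * DD (1,0) q1 q)) p := by rw [e1]
    _ = 2 * (DD (1,0) (fun q => (-(1/6):ℂ) * DD (1,0) (DD (1,0) (DD (1,0) q1)) q) p
          + DD (1,0) (fun q => (-(2/3):ℂ) * (q1 q * DD (1,0) q1 q)) p) := by
        rw [DD_add dA dB]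
    _ = 2 * ((-(1/6)) * DD (1,0) (DD (1,0) (DD (1,0) (DD (1,0) q1))) p
          + (-(2/3)) * (DD (1,0) q1 p * DD (1,0) q1 p + q1 p * DD (1,0) (DD (1,0) q1) p)) := by
        rw [DD_const_mul (hXXX.differentiable (by simp)), DD_const_mul dmul,
          DD_mul dq1 (hX.differentiable (by simp))]
    _ = _ := by ring

/-- If `(q0, q1)` solves the Boussinesq system, then
`u(x,t) = -(4 q1(x, √3 t) + 1)/6` solves the nonlinear string equation
`u_tt = u_xx + 3 (u²)_xx - u_xxxx`. -/
theorem boussinesq_system_implies_string_equation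
    (q0 q1 u : ℝ × ℝ → ℂ)
    (hq0 : ContDiff ℝ (⊤ : ℕ∞) q0) (hq1 : ContDiff ℝ (⊤ : ℕ∞) q1)
    (hsys1 : ∀ x t : ℝ,
      deriv (fun s => q0 (x, s)) t
        + (1 / 6) * iteratedDeriv 3 (fun y => q1 (y, t)) x
        + (2 / 3) * q1 (x, t) * deriv (fun y => q1 (y, t)) x = 0)
    (hsys2 : ∀ x t : ℝ,
      deriv (fun s => q1 (x, s)) t - 2 * deriv (fun y => q0 (y, t)) x = 0)
    (hu : ∀ x t : ℝ, u (x, t) = -(4 * q1 (x, Real.sqrt 3 * t) + 1) / 6) :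
    ∀ x t : ℝ,
      iteratedDeriv 2 (fun s => u (x, s)) t
        = iteratedDeriv 2 (fun y => u (y, t)) x
          + 3 * iteratedDeriv 2 (fun y => (u (y, t)) ^ 2) x
          - iteratedDeriv 4 (fun y => u (y, t)) x := by
  intro x t
  set c : ℂ := -(2/3) with hc
  set s : ℂ := ((Real.sqrt 3 : ℝ) : ℂ) with hsdef
  have hs : s * s = 3 := by
    rw [hsdef, ← Complex.ofReal_mul, Real.mul_self_sqrt (by norm_num)]
    norm_num
  -- u in normal form
  have hu' : u = fun p => c * q1 (SS p) + (-(1/6)) := by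
    funext p
    have h := hu p.1 p.2
    rw [SS_apply]
    rw [show ((p.1, p.2) : ℝ × ℝ) = p from rfl] at h
    rw [h, hc]; ring
  have hus : ContDiff ℝ (⊤ : ℕ∞) u := by
    rw [hu']; exact (contDiff_const.mul (hq1.comp SS.contDiff)).add contDiff_const
  have husq : ContDiff ℝ (⊤ : ℕ∞) (fun p => u p ^ 2) := hus.pow 2
  -- convert hypotheses to DD form
  have h1 : ∀ p : ℝ × ℝ, DD (0,1) q0 p + (1/6) * DD (1,0) (DD (1,0) (DD (1,0) q1)) p
      + (2/3) * q1 p * DD (1,0) q1 p = 0 := by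
    intro p
    have h := hsys1 p.1 p.2
    rw [deriv_snd hq0, iteratedDeriv_fst hq1 3, deriv_fst hq1] at h
    exact h
  have h2 : ∀ p : ℝ × ℝ, DD (0,1) q1 p - 2 * DD (1,0) q0 p = 0 := by
    intro p
    have h := hsys2 p.1 p.2
    rw [deriv_snd hq1, deriv_fst hq0] at h
    exact h
  have key := key_q1 q0 q1 hq0 hq1 h1 h2
  -- rewrite goal in DD form
  have g1 : iteratedDeriv 2 (fun sv => u (x, sv)) t = DD (0,1) (DD (0,1) u) (x, t) :=
    iteratedDeriv_snd hus 2 x t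
  have g2 : iteratedDeriv 2 (fun y => u (y, t)) x = DD (1,0) (DD (1,0) u) (x, t) :=
    iteratedDeriv_fst hus 2 x t
  have g3 : iteratedDeriv 2 (fun y => (u (y, t)) ^ 2) x
      = DD (1,0) (DD (1,0) (fun p => u p ^ 2)) (x, t) :=
    iteratedDeriv_fst husq 2 x t
  have g4 : iteratedDeriv 4 (fun y => u (y, t)) x
      = DD (1,0) (DD (1,0) (DD (1,0) (DD (1,0) u))) (x, t) :=
    iteratedDeriv_fst hus 4 x t
  rw [g1, g2, g3, g4]
  -- derivatives of u
  have Du_x : DD (1,0) u = fun p => c * DD (1,0) q1 (SS p) := by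
    rw [hu']; exact Dx_form hq1 c _
  have Du_xx : DD (1,0) (DD (1,0) u) = fun p => c * DD (1,0) (DD (1,0) q1) (SS p) := by
    rw [Du_x]; exact Dx_form' (hq1.dd _) c
  have Du_x3 : DD (1,0) (DD (1,0) (DD (1,0) u))
      = fun p => c * DD (1,0) (DD (1,0) (DD (1,0) q1)) (SS p) := by
    rw [Du_xx]; exact Dx_form' ((hq1.dd _).dd _) c
  have Du_x4 : DD (1,0) (DD (1,0) (DD (1,0) (DD (1,0) u)))
      = fun p => c * DD (1,0) (DD (1,0) (DD (1,0) (DD (1,0) q1))) (SS p) := by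
    rw [Du_x3]; exact Dx_form' (((hq1.dd _).dd _).dd _) c
  have Du_t : DD (0,1) u = fun p => s * c * DD (0,1) q1 (SS p) := by
    rw [hu']
    have := Dx_form hq1 c (-(1/6))
    rw [show (fun p => c * q1 (SS p) + (-(1/6):ℂ))
        = (fun p => c * q1 (SS p) + (-(1/6):ℂ)) from rfl]
    have e : DD (0,1) (fun p => c * q1 (SS p) + (-(1/6):ℂ))
        = DD (0,1) (fun p => c * q1 (SS p)) := by
      funext p
      rw [DD_const_mul_add (f := fun p => q1 (SS p))
        ((hq1.comp SS.contDiff).differentiable (by simp)) c (-(1/6)) _ p,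
        DD_const_mul (f := fun p => q1 (SS p))
        ((hq1.comp SS.contDiff).differentiable (by simp)) c _ p]
    rw [e, Dt_form' hq1 c, ← hsdef]
  have Du_tt : DD (0,1) (DD (0,1) u)
      = fun p => s * (s * c) * DD (0,1) (DD (0,1) q1) (SS p) := by
    rw [Du_t]
    have := Dt_form' (hq1.dd (0,1)) (s * c)
    rw [show (fun p => s * c * DD (0,1) q1 (SS p))
        = (fun p => (s * c) * DD (0,1) q1 (SS p)) from rfl, this, ← hsdef]

  -- derivatives of u²
  have dus := hus.differentiable (by simp)
  have dux : Differentiable ℝ (DD (1,0) u) := (hus.dd _).differentiable (by simp)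
  have sq1 : DD (1,0) (fun p => u p ^ 2)
      = fun p => DD (1,0) u p * u p + u p * DD (1,0) u p := by
    funext p
    rw [show (fun p => u p ^ 2) = (fun p => u p * u p) from by funext q; ring]
    exact DD_mul dus dus _ p
  have sq2 : DD (1,0) (DD (1,0) (fun p => u p ^ 2)) (x, t)
      = (DD (1,0) (DD (1,0) u) (x,t) * u (x,t) + DD (1,0) u (x,t) * DD (1,0) u (x,t))
        + (DD (1,0) u (x,t) * DD (1,0) u (x,t) + u (x,t) * DD (1,0) (DD (1,0) u) (x,t)) := by
    rw [sq1]
    rw [DD_add (f := fun p => DD (1,0) u p * u p) (g := fun p => u p * DD (1,0) u p) (dux.mul dus) (dus.mul dux) _ (x,t)]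
    rw [DD_mul dux dus _ (x,t), DD_mul dus dux _ (x,t)]
  rw [sq2, Du_tt, Du_x4, Du_xx, Du_x]
  beta_reduce
  have hup : u (x, t) = c * q1 (SS (x,t)) + (-(1/6)) := by rw [hu']
  rw [hup, key (SS (x, t)), hc]
  set P := SS (x, t)
  set B1 := DD (1,0) q1 P
  set B2 := DD (1,0) (DD (1,0) q1) P
  set B4 := DD (1,0) (DD (1,0) (DD (1,0) (DD (1,0) q1))) P
  set Z := q1 P
  linear_combination ((-(2/3):ℂ) * (-(1/3) * B4 - (4/3) * (B1*B1 + Z*B2))) * hs
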